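/- Soundness for refutation: if the Fail state is reached by a sequence of valid Lemur rule applications starting from (P, ∅, [p₀]), then p₀ is not an invariant on P. -/

import Mathlib

open scoped Classical

/-- An execution is a finite list of (state, line) pairs. -/
abbrev Execution (σ : Type*) := List (σ × ℕ)

/-- A program is a set of executions. -/
abbrev Program (σ : Type*) := Set (Execution σ)

/-- A property is a predicate on states together with a line number. -/
abbrev Property (σ : Type*) := (σ → Prop) × ℕ

/-- A property holds on an execution if its predicate is true at every
occurrence of its line. -/
def holdsOn {σ : Type*} (p : Property σ) (e : Execution σ) : Prop :=
  ∀ pr ∈ e, pr.2 = p.2 → p.1 pr.1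

/-- `p` is an invariant on `P` if it holds on every execution of `P`. -/
def isInvariant {σ : Type*} (P : Program σ) (p : Property σ) : Prop :=
  ∀ e ∈ P, holdsOn p e

/-- Truncate an execution at the first occurrence of `q`'s line where `q`'s
predicate fails. -/
noncomputable def truncAt {σ : Type*} (q : Property σ) : Execution σ → Execution σ
  | [] => []
  | a :: l => if a.2 = q.2 ∧ ¬ q.1 a.1 then [] else a :: truncAt q l

/-- The program `asm P q`: each execution of `P` truncated at the first
failure of the assumption `q`. -/
noncomputable def asmP {σ : Type*} (P : Program σ) (q : Property σ) : Program σ :=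
  (truncAt q) '' P

/-- `q` implies `p` with respect to `P`: `p` is an invariant on `asm(P, q)`. -/
noncomputable def impliesWrt {σ : Type*} (P : Program σ) (q p : Property σ) : Prop :=
  isInvariant (asmP P q) p

/-- `q` is stable for `P`: on each execution, `q`'s predicate is either true at
all occurrences of `q`'s line or false at all of them. -/
def isStable {σ : Type*} (P : Program σ) (q : Property σ) : Prop :=
  ∀ e ∈ P, (∀ pr ∈ e, pr.2 = q.2 → q.1 pr.1) ∨ (∀ pr ∈ e, pr.2 = q.2 → ¬ q.1 pr.1)

/-- The negation of a property. -/
def pneg {σ : Type*} (q : Property σ) : Property σ := (fun s => ¬ q.1 s, q.2)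


/-- Apply an optional assumption to a program. -/
noncomputable def asmOpt {σ : Type*} (P : Program σ) : Option (Property σ) → Program σ
  | none => P
  | some q => asmP P q

/-- A verifier takes a program, an optional assumption and a property, and
returns `some true` (proven), `some false` (falsified) or `none` (unknown). -/
abbrev Verifier (σ : Type*) :=
  Program σ → Option (Property σ) → Property σ → Option Bool

/-- Configurations of the Lemur calculus: a triple of program, assumption set
(empty or singleton) and trail, or a terminal `success`/`fail` state. -/
inductive Conf (σ : Type*) where
  | state (P : Program σ) (A : Option (Property σ)) (T : List (Property σ))
  | success
  | fail

/-- The transition rules of the Lemur calculus, parameterized by a verifier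
`V`, a proposal oracle `Ωp` and a repair oracle `Ωr`. -/
inductive LStep {σ : Type*} (V : Verifier σ)
    (Ωp : Program σ → Property σ → Set (Property σ))
    (Ωr : Program σ → Property σ → Property σ → Option Bool → Set (Property σ)) :
    Conf σ → Conf σ → Prop where
  | propose {P A T' p q} (h1 : V P A p = none) (h2 : q ∈ Ωp P p) :
      LStep V Ωp Ωr (.state P A (T' ++ [p])) (.state P (some q) (T' ++ [p]))
  | decide {P q T' p} (h : V P (some q) p = some true) :
      LStep V Ωp Ωr (.state P (some q) (T' ++ [p])) (.state P none (T' ++ [p, q]))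
  | backtrack {P A T' p q q'} (h1 : V P A q ≠ some true) (h2 : q' ∈ Ωp P p) :
      LStep V Ωp Ωr (.state P A (T' ++ [p, q])) (.state P (some q') (T' ++ [p]))
  | repair1 {P q T' p q'} (h1 : V P (some q) p = none) (h2 : q' ∈ Ωr P p q none) :
      LStep V Ωp Ωr (.state P (some q) (T' ++ [p])) (.state P (some q') (T' ++ [p]))
  | repair2 {P T' p q q'} (h1 : V P none q = some false)
      (h2 : q' ∈ Ωr P p q (some false)) :
      LStep V Ωp Ωr (.state P none (T' ++ [p, q])) (.state P (some q') (T' ++ [p]))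
  | success1 {P T' p} (h : V P none p = some true) :
      LStep V Ωp Ωr (.state P none (T' ++ [p])) .success
  | success2 {P T' p q} (hs : isStable P q) (h : V P (some (pneg q)) p = some true) :
      LStep V Ωp Ωr (.state P none (T' ++ [p, q])) .success
  | fail {P A p} (h : V P A p = some false) :
      LStep V Ωp Ωr (.state P A [p]) .fail

/-- A configuration is reachable from another by a sequence of valid rule
applications. -/
def Reaches {σ : Type*} (V : Verifier σ)
    (Ωp : Program σ → Property σ → Set (Property σ))
    (Ωr : Program σ → Property σ → Property σ → Option Bool → Set (Property σ)) :
    Conf σ → Conf σ → Prop :=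
  Relation.ReflTransGen (LStep V Ωp Ωr)

/-!
No rule changes the program, and rules only push onto or pop from the end of the trail without
ever emptying it, so every reachable state is `(P, A, p₀ :: T)`. The `fail` rule fires only on a
trail `[p]`, hence on `p = p₀`, where the verifier refutes `p₀` on `asmOpt P A`. An assumption
only truncates executions to prefixes, so a counterexample there is one in `P` as well.
-/

lemma truncAt_prefix {σ : Type*} (q : Property σ) : ∀ e : Execution σ, truncAt q e <+: e
  | [] => List.nil_prefix
  | a :: e => by
    rw [truncAt]
    split_ifs
    · exact List.nil_prefix
    · exact (List.prefix_cons_inj a).2 (truncAt_prefix q e)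

lemma holdsOn.mono {σ : Type*} {p : Property σ} {e e' : Execution σ} (h : holdsOn p e)
    (hsub : e' ⊆ e) : holdsOn p e' :=
  fun pr hpr => h pr (hsub hpr)

lemma isInvariant.asmP {σ : Type*} {P : Program σ} {p : Property σ} (h : isInvariant P p)
    (q : Property σ) : isInvariant (asmP P q) p := by
  rintro _ ⟨e, he, rfl⟩
  exact (h e he).mono (truncAt_prefix q e).subset

lemma isInvariant.asmOpt {σ : Type*} {P : Program σ} {p : Property σ} (h : isInvariant P p) :
    ∀ A : Option (Property σ), isInvariant (asmOpt P A) p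
  | none => h
  | some q => h.asmP q

def Conf.Rooted {σ : Type*} (P : Program σ) (p₀ : Property σ) : Conf σ → Prop
  | .state P' _ T => P' = P ∧ T.head? = some p₀
  | _ => True

section Rooted

variable {σ : Type*} {V : Verifier σ} {Ωp : Program σ → Property σ → Set (Property σ)}
  {Ωr : Program σ → Property σ → Property σ → Option Bool → Set (Property σ)}
  {P : Program σ} {p₀ : Property σ} {c c' : Conf σ}

lemma LStep.rooted (hstep : LStep V Ωp Ωr c c') (hc : c.Rooted P p₀) : c'.Rooted P p₀ := by
  cases hstep <;> simp_all [Conf.Rooted]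

lemma Reaches.rooted (h : Reaches V Ωp Ωr c c') (hc : c.Rooted P p₀) : c'.Rooted P p₀ := by
  induction h with
  | refl => exact hc
  | tail _ hstep ih => exact hstep.rooted ih

end Rooted

/-- Soundness of the Lemur calculus for refutation: if the `fail` state is
reachable by valid rule applications from `(P, ∅, [p₀])` and the verifier is
sound for negative answers, then `p₀` is not an invariant on `P`. -/
theorem stmt_11 {σ : Type*} (V : Verifier σ)
    (Ωp : Program σ → Property σ → Set (Property σ))
    (Ωr : Program σ → Property σ → Property σ → Option Bool → Set (Property σ))
    (hV : ∀ (P : Program σ) (A : Option (Property σ)) (p : Property σ),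
      V P A p = some false → ¬ isInvariant (asmOpt P A) p)
    (P : Program σ) (p₀ : Property σ)
    (h : Reaches V Ωp Ωr (.state P none [p₀]) .fail) :
    ¬ isInvariant P p₀ := by
  rcases Relation.ReflTransGen.cases_tail h with hfail | ⟨c, hreach, hstep⟩
  · cases hfail
  cases hstep with
  | @fail P' A p hfalse =>
    obtain ⟨rfl, hp⟩ := Reaches.rooted (P := P) (p₀ := p₀) hreach ⟨rfl, rfl⟩
    cases hp
    exact fun hinv => hV _ A _ hfalse (hinv.asmOpt A)
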